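/- arXiv:1601.07205 — 2 statements merged into one kernel-verified Lean document; each statement's English description precedes it below -/
import Mathlib

section
/- Let n ≥ 1 be an integer and let 0 < r < 1. For each integer M with 1 ≤ M < r^{-n}, there exist a set Q ⊆ ℝⁿ which is a product of n bounded open intervals and M orientation-preserving contracting similarities f₁,…,f_M of ℝⁿ, each with scaling ratio r, such that fᵢ(closure Q) ⊆ Q for every i and the sets fᵢ(closure Q), i = 1,…,M, are pairwise disjoint. -/
/-!
Pick `s > r` with `M r sⁿ⁻¹ < 1` (possible since `M rⁿ < 1`) and let `Q = ∏ⱼ (-sʲ, sʲ)`,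
`j = 0, …, n - 1`. Scaling by `r` the rotation that sends coordinate `j` to `j + 1` and the last
coordinate to the first maps the closed box into a box whose `(j + 1)`-st half-side `r sʲ` is
smaller than `sʲ⁺¹`, and whose first half-side `r sⁿ⁻¹` is so small that `M` disjoint translates
along the first axis fit into `(-1, 1)`.
-/
open Set Metric Filter MeasureTheory
open scoped ENNReal Topology NNReal

noncomputable section

/-- `L_Φ(x,r) = sup {|Φ(x) - Φ(y)| : y ∈ Ω, |x - y| ≤ r}`. -/
noncomputable def linDil {X : Type*} [MetricSpace X] (Ω : Set X) (Φ : X → X) (x : X) (r : ℝ) :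
    ℝ≥0∞ :=
  ⨆ y ∈ {y | y ∈ Ω ∧ dist x y ≤ r}, edist (Φ x) (Φ y)

/-- `l_Φ(x,r) = inf {|Φ(x) - Φ(y)| : y ∈ Ω, |x - y| ≥ r}`. -/
noncomputable def linCon {X : Type*} [MetricSpace X] (Ω : Set X) (Φ : X → X) (x : X) (r : ℝ) :
    ℝ≥0∞ :=
  ⨅ y ∈ {y | y ∈ Ω ∧ r ≤ dist x y}, edist (Φ x) (Φ y)

/-- `H_Φ(x) = limsup_{r → 0⁺} L_Φ(x,r) / l_Φ(x,r)`. -/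
noncomputable def qcH {X : Type*} [MetricSpace X] (Ω : Set X) (Φ : X → X) (x : X) : ℝ≥0∞ :=
  Filter.limsup (fun r : ℝ => linDil Ω Φ x r / linCon Ω Φ x r) (𝓝[>] (0 : ℝ))

/-- A map `Φ`, viewed as a map of `Ω` into `X`, is quasiconformal if `H_Φ(x) ≤ H` for all
`x ∈ Ω`, for some finite `H ≥ 1`. -/
def QuasiconformalOn {X : Type*} [MetricSpace X] (Ω : Set X) (Φ : X → X) : Prop :=
  ∃ H : ℝ, 1 ≤ H ∧ ∀ x ∈ Ω, qcH Ω Φ x ≤ ENNReal.ofReal H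

/-- `Φ` restricts to a homeomorphism of `Ω` onto `Ω'`. -/
def IsHomeoOn {X : Type*} [TopologicalSpace X] (Φ : X → X) (Ω Ω' : Set X) : Prop :=
  ∃ e : Ω ≃ₜ Ω', ∀ x : Ω, (e x : X) = Φ (x : X)

/-- `f` is a similarity with ratio `r`. -/
def IsSimilarityWith {X : Type*} [MetricSpace X] (r : ℝ) (f : X → X) : Prop :=
  0 < r ∧ ∀ x y, dist (f x) (f y) = r * dist x y

/-- The strong separation condition for the iterated function system `f` on the set `Q`:
each `f i` maps the closure of `Q` into `Q`, and the images of the closure of `Q` are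
pairwise disjoint. -/
def StrongSeparation {X : Type*} [MetricSpace X] {ι : Type*} (f : ι → X → X) (Q : Set X) :
    Prop :=
  (∀ i, f i '' closure Q ⊆ Q) ∧
    ∀ i j, i ≠ j → Disjoint (f i '' closure Q) (f j '' closure Q)

/-- `f_σ = f_{σ₁} ∘ ⋯ ∘ f_{σ_k}` for a finite word `σ`. -/
def iterComp {X ι : Type*} (f : ι → X → X) : List ι → X → X
  | [] => id
  | i :: w => f i ∘ iterComp f w

/-- The invariant set `K = ⋂_k ⋃_{|σ| = k} f_σ(closure Q)` of an iterated function system. -/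
def invariantSet {X : Type*} [MetricSpace X] {ι : Type*} (f : ι → X → X) (Q : Set X) :
    Set X :=
  ⋂ k : ℕ, ⋃ w : Fin k → ι, iterComp f (List.ofFn w) '' closure Q

/-- The distance between two subsets of a metric space. -/
noncomputable def setDist {X : Type*} [MetricSpace X] (A B : Set X) : ℝ :=
  sInf ((fun p : X × X => dist p.1 p.2) '' A ×ˢ B)

end

/-- A map of `ℝⁿ` is an orientation-preserving similarity with ratio `r > 0` if it has the
form `x ↦ r • A x + v` for a linear isometry `A` with `det A = 1` and a vector `v`. -/
def IsOrientationPreservingSimilarityWith {n : ℕ} (r : ℝ)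
    (f : EuclideanSpace ℝ (Fin n) → EuclideanSpace ℝ (Fin n)) : Prop :=
  0 < r ∧ ∃ (A : EuclideanSpace ℝ (Fin n) ≃ₗᵢ[ℝ] EuclideanSpace ℝ (Fin n))
    (v : EuclideanSpace ℝ (Fin n)),
      LinearMap.det (A.toLinearEquiv :
        EuclideanSpace ℝ (Fin n) →ₗ[ℝ] EuclideanSpace ℝ (Fin n)) = 1 ∧
      ∀ x, f x = r • A x + v

open Function

section SignedPermutation

variable {ι : Type*} [Fintype ι]

noncomputable def signedPerm (ε : ι → ℤˣ) (σ : Equiv.Perm ι) :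
    EuclideanSpace ℝ ι ≃ₗᵢ[ℝ] EuclideanSpace ℝ ι where
  toFun x := WithLp.toLp 2 fun j => (ε j : ℝ) * x (σ j)
  invFun x := WithLp.toLp 2 fun j => (ε (σ.symm j) : ℝ) * x (σ.symm j)
  map_add' x y := by ext j; simp [mul_add]
  map_smul' c x := by ext j; simp [mul_left_comm]
  left_inv x := by ext j; simp [← mul_assoc, ← Int.cast_mul, ← Units.val_mul]
  right_inv x := by ext j; simp [← mul_assoc, ← Int.cast_mul, ← Units.val_mul]
  norm_map' x := by
    simp only [EuclideanSpace.norm_eq, LinearEquiv.coe_mk, LinearMap.coe_mk, AddHom.coe_mk,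
      norm_mul, mul_pow, Real.norm_eq_abs, sq_abs, ← Int.cast_pow, Int.isUnit_sq (ε _).isUnit,
      Int.cast_one, one_mul, Equiv.sum_comp σ (fun j => x j ^ 2)]

@[simp]
theorem signedPerm_apply (ε : ι → ℤˣ) (σ : Equiv.Perm ι) (x : EuclideanSpace ℝ ι) (j : ι) :
    signedPerm ε σ x j = (ε j : ℝ) * x (σ j) := rfl

theorem det_signedPerm [DecidableEq ι] (ε : ι → ℤˣ) (σ : Equiv.Perm ι) :
    LinearMap.det ((signedPerm ε σ).toLinearEquiv :
        EuclideanSpace ℝ ι →ₗ[ℝ] EuclideanSpace ℝ ι) =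
      (((∏ j, ε j) * Equiv.Perm.sign σ : ℤˣ) : ℝ) := by
  let b := (EuclideanSpace.basisFun ι ℝ).toBasis
  have hmat : LinearMap.toMatrix b b (signedPerm ε σ).toLinearEquiv =
      Matrix.diagonal (fun j => (ε j : ℝ)) * σ.permMatrix ℝ := by
    ext k i
    simp [b, LinearMap.toMatrix_apply, Matrix.diagonal_mul, Equiv.Perm.permMatrix,
      PEquiv.toMatrix_apply, Equiv.toPEquiv_apply]
  rw [← LinearMap.det_toMatrix b, hmat, Matrix.det_mul, Matrix.det_diagonal,
    Matrix.det_permutation]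
  push_cast
  rfl

end SignedPermutation

-- The factor `(-1)ᵐ` cancels the sign of the cyclic permutation of `m + 1` coordinates.
noncomputable def cyclicShift (m : ℕ) :
    EuclideanSpace ℝ (Fin (m + 1)) ≃ₗᵢ[ℝ] EuclideanSpace ℝ (Fin (m + 1)) :=
  signedPerm (Pi.mulSingle 0 ((-1) ^ m)) (finRotate (m + 1)).symm

theorem cyclicShift_apply_zero (m : ℕ) (x : EuclideanSpace ℝ (Fin (m + 1))) :
    cyclicShift m x 0 = (-1) ^ m * x (Fin.last m) := by
  have hσ : (finRotate (m + 1)).symm 0 = Fin.last m :=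
    (Equiv.symm_apply_eq _).2 finRotate_last.symm
  simp [cyclicShift, hσ]

theorem cyclicShift_apply_succ (m : ℕ) (x : EuclideanSpace ℝ (Fin (m + 1))) (j : Fin m) :
    cyclicShift m x j.succ = x j.castSucc := by
  have hσ : (finRotate (m + 1)).symm j.succ = j.castSucc := by
    rw [Equiv.symm_apply_eq, finRotate_apply, Fin.coeSucc_eq_succ]
  simp [cyclicShift, hσ, Fin.succ_ne_zero]

theorem det_cyclicShift (m : ℕ) :
    LinearMap.det ((cyclicShift m).toLinearEquiv :
        EuclideanSpace ℝ (Fin (m + 1)) →ₗ[ℝ] EuclideanSpace ℝ (Fin (m + 1))) = 1 := by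
  rw [cyclicShift, det_signedPerm, Finset.prod_pi_mulSingle', Equiv.Perm.sign_symm,
    sign_finRotate]
  simp [← pow_add, ← two_mul, pow_mul]

theorem isSimilarityWith_smul_add {E : Type*} [NormedAddCommGroup E] [NormedSpace ℝ E]
    {r : ℝ} (hr : 0 < r) (A : E →ₗᵢ[ℝ] E) (v : E) : IsSimilarityWith r fun x => r • A x + v :=
  ⟨hr, fun x y => by
    simp [dist_eq_norm, ← smul_sub, ← map_sub, norm_smul, abs_of_pos hr]⟩

theorem StrongSeparation.of_closure_subset {X ι : Type*} [MetricSpace X] {f : ι → X → X}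
    {Q K : Set X} (hQK : closure Q ⊆ K) (hKQ : ∀ i, MapsTo (f i) K Q)
    (hdisj : Pairwise (Disjoint on fun i => f i '' K)) : StrongSeparation f Q :=
  ⟨fun i => (image_mono hQK).trans (hKQ i).image_subset,
    fun _ _ hij => (hdisj hij).mono (image_mono hQK) (image_mono hQK)⟩

theorem closure_setOf_forall_Ioo_subset {ι : Type*} (a b : ι → ℝ) :
    closure {x : EuclideanSpace ℝ ι | ∀ j, x j ∈ Ioo (a j) (b j)} ⊆
      {x | ∀ j, x j ∈ Icc (a j) (b j)} := by
  refine closure_minimal (fun x hx j => Ioo_subset_Icc_self (hx j)) ?_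
  simp only [ofPred_forall]
  exact isClosed_iInter fun j => isClosed_Icc.preimage (by fun_prop)

theorem exists_pairwise_disjoint_Icc_subset_Ioo {M : ℕ} {u : ℝ} (hu : M * u < 1) :
    ∃ t : Fin M → ℝ, (∀ i, Icc (t i - u) (t i + u) ⊆ Ioo (-1) 1) ∧
      Pairwise (Disjoint on fun i => Icc (t i - u) (t i + u)) := by
  rcases M.eq_zero_or_pos with rfl | hM
  · exact ⟨finZeroElim, finZeroElim, finZeroElim⟩
  set w : ℝ := (M : ℝ)⁻¹
  have hw : 0 < w := by positivity
  have hMw : (M : ℝ) * w = 1 := mul_inv_cancel₀ (by positivity)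
  have huw : u < w := lt_of_mul_lt_mul_left (hu.trans_eq hMw.symm) M.cast_nonneg
  -- The `i`-th interval is centred in the `i`-th of `M` equal subintervals of `(-1, 1)`.
  refine ⟨fun i => -1 + (2 * i + 1) * w, fun i y ⟨hy₁, hy₂⟩ => ⟨?_, ?_⟩, ?_⟩
  · linarith [mul_nonneg (Nat.cast_nonneg (α := ℝ) i) hw.le]
  · have hi : (i + 1 : ℝ) ≤ M := by exact_mod_cast i.isLt
    linarith [mul_le_mul_of_nonneg_right hi hw.le]
  · rw [pairwise_disjoint_on]
    intro i j hij
    have hij' : (i + 1 : ℝ) ≤ j := by exact_mod_cast hij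
    rw [Set.disjoint_left]
    rintro y ⟨-, hy₁⟩ ⟨hy₂, -⟩
    linarith [mul_le_mul_of_nonneg_right hij' hw.le]

theorem exists_lt_mul_mul_pow_lt_one {M m : ℕ} {r : ℝ} (h : M * r ^ (m + 1) < 1) :
    ∃ s, r < s ∧ M * (r * s ^ m) < 1 := by
  have hcont : Continuous fun s : ℝ => M * (r * s ^ m) := by fun_prop
  have hlt : M * (r * r ^ m) < 1 := by rwa [← pow_succ']
  have hev : ∀ᶠ s in 𝓝[>] r, M * (r * s ^ m) < 1 :=
    ((hcont.tendsto r).eventually_lt_const hlt).filter_mono nhdsWithin_le_nhds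
  obtain ⟨s, hs, hrs⟩ := (hev.and self_mem_nhdsWithin).exists
  exact ⟨s, hrs, hs⟩

section Packing

variable {m M : ℕ} {r s : ℝ} {x : EuclideanSpace ℝ (Fin (m + 1))}

theorem abs_mul_cyclicShift_zero_le (hr : 0 ≤ r)
    (hx : ∀ j : Fin (m + 1), |x j| ≤ s ^ (j : ℕ)) :
    |r * cyclicShift m x 0| ≤ r * s ^ m := by
  simpa [cyclicShift_apply_zero, abs_mul, abs_of_nonneg hr] using
    mul_le_mul_of_nonneg_left (hx (Fin.last m)) hr

theorem abs_mul_cyclicShift_succ_lt (hr : 0 < r) (hrs : r < s)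
    (hx : ∀ j : Fin (m + 1), |x j| ≤ s ^ (j : ℕ)) (j : Fin m) :
    |r * cyclicShift m x j.succ| < s ^ (j.succ : ℕ) := by
  rw [cyclicShift_apply_succ, abs_mul, abs_of_pos hr, Fin.val_succ, pow_succ']
  exact mul_lt_mul_of_lt_of_le_of_nonneg_of_pos hrs (hx j.castSucc) hr.le
    (pow_pos (hr.trans hrs) _)

theorem strongSeparation_cyclicShift {t : Fin M → ℝ} (hr : 0 < r) (hrs : r < s)
    (ht : ∀ i, Icc (t i - r * s ^ m) (t i + r * s ^ m) ⊆ Ioo (-1) 1)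
    (hdisj : Pairwise (Disjoint on fun i => Icc (t i - r * s ^ m) (t i + r * s ^ m))) :
    StrongSeparation (fun i x => r • cyclicShift m x + EuclideanSpace.single 0 (t i))
      {x : EuclideanSpace ℝ (Fin (m + 1)) |
        ∀ j : Fin (m + 1), x j ∈ Ioo (-s ^ (j : ℕ)) (s ^ (j : ℕ))} := by
  set f := fun i x => r • cyclicShift m x + EuclideanSpace.single 0 (t i)
  have hf_zero : ∀ i, f i '' {x | ∀ j : Fin (m + 1), x j ∈ Icc (-s ^ (j : ℕ)) (s ^ (j : ℕ))} ⊆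
      (fun y => y 0) ⁻¹' Icc (t i - r * s ^ m) (t i + r * s ^ m) := by
    rintro i _ ⟨x, hx, rfl⟩
    have := abs_le.1 (abs_mul_cyclicShift_zero_le hr.le fun j => abs_le.2 (hx j))
    simp only [mem_preimage, f, PiLp.add_apply, PiLp.smul_apply, smul_eq_mul, PiLp.single_apply,
      if_true]
    constructor <;> linarith
  refine .of_closure_subset (closure_setOf_forall_Ioo_subset _ _) (fun i x hx j => ?_) ?_
  · cases j using Fin.cases with
    | zero => simpa using ht i (hf_zero i ⟨x, hx, rfl⟩)
    | succ j =>
      simpa [f, Fin.succ_ne_zero] using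
        abs_lt.1 (abs_mul_cyclicShift_succ_lt hr hrs (fun j => abs_le.2 (hx j)) j)
  · intro i i' hii'
    exact ((hdisj hii').preimage _).mono (hf_zero i) (hf_zero i')

end Packing

theorem packing_similarities_general
    (n : ℕ) (hn : 1 ≤ n) (r : ℝ) (hr₀ : 0 < r)
    (M : ℕ) (hM₂ : (M : ℝ) < r ^ (-(n : ℤ))) :
    ∃ (a b : Fin n → ℝ) (Q : Set (EuclideanSpace ℝ (Fin n)))
      (f : Fin M → EuclideanSpace ℝ (Fin n) → EuclideanSpace ℝ (Fin n)),
      (∀ i, a i < b i) ∧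
      Q = {x : EuclideanSpace ℝ (Fin n) | ∀ i, x i ∈ Set.Ioo (a i) (b i)} ∧
      (∀ i, IsOrientationPreservingSimilarityWith r (f i)) ∧
      (∀ i, IsSimilarityWith r (f i)) ∧
      StrongSeparation f Q := by
  obtain ⟨m, rfl⟩ := Nat.exists_eq_add_of_le' hn
  have hMr : M * r ^ (m + 1) < 1 := by
    rwa [zpow_neg, zpow_natCast, ← one_div, lt_div_iff₀ (by positivity)] at hM₂
  obtain ⟨s, hrs, hMs⟩ := exists_lt_mul_mul_pow_lt_one hMr
  obtain ⟨t, ht, hdisj⟩ := exists_pairwise_disjoint_Icc_subset_Ioo hMs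
  refine ⟨fun j => -s ^ (j : ℕ), fun j => s ^ (j : ℕ), _,
    fun i x => r • cyclicShift m x + EuclideanSpace.single 0 (t i), fun j => ?_, rfl,
    fun i => ⟨hr₀, cyclicShift m, _, det_cyclicShift m, fun _ => rfl⟩,
    fun i => isSimilarityWith_smul_add hr₀ (cyclicShift m).toLinearIsometry _,
    strongSeparation_cyclicShift hr₀ hrs ht hdisj⟩
  have := pow_pos (hr₀.trans hrs) (j : ℕ)
  linarith

/-- **Almost full packings.** Let `n ≥ 1` and `0 < r < 1`. For each integer `1 ≤ M < r⁻ⁿ`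
there are a product `Q` of `n` bounded open intervals and an iterated function system of
`M` orientation-preserving contracting similarities of `ℝⁿ`, each of scaling ratio `r`,
satisfying the strong separation condition on `Q`. -/
theorem packing_similarities
    (n : ℕ) (hn : 1 ≤ n) (r : ℝ) (hr₀ : 0 < r) (hr₁ : r < 1)
    (M : ℕ) (hM₁ : 1 ≤ M) (hM₂ : (M : ℝ) < r ^ (-(n : ℤ))) :
    ∃ (a b : Fin n → ℝ) (Q : Set (EuclideanSpace ℝ (Fin n)))
      (f : Fin M → EuclideanSpace ℝ (Fin n) → EuclideanSpace ℝ (Fin n)),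
      (∀ i, a i < b i) ∧
      Q = {x : EuclideanSpace ℝ (Fin n) | ∀ i, x i ∈ Set.Ioo (a i) (b i)} ∧
      (∀ i, IsOrientationPreservingSimilarityWith r (f i)) ∧
      (∀ i, IsSimilarityWith r (f i)) ∧
      StrongSeparation f Q :=
  packing_similarities_general n hn r hr₀ M hM₂
end

section
/- Let 𝓘 = {f₁,…,f_N} and 𝓙 = {g₁,…,g_N} be iterated function systems of contracting similarities of ℝⁿ satisfying the strong separation condition on bounded open sets Q and S respectively, let φ : ℝⁿ \ (⋃ᵢ fᵢ(Q)) → ℝⁿ \ (⋃ᵢ gᵢ(S)) be an H-quasiconformal homeomorphism satisfying the compatibility condition, and let Φ : ℝⁿ → ℝⁿ be the generated homeomorphism (so that Φ = φ off ⋃ᵢ fᵢ(Q), and Φ ∘ f_σ = g_σ ∘ φ ∘ (f_σ)^{-1} ∘ f_σ on each cell f_σ(closure Q) \ ⋃ᵢ f_{σ i}(Q)). Set d = (1/2)·dist(⋃ᵢ fᵢ(closure Q), ℝⁿ \ Q), δ = (1/2)·dist(⋃ᵢ gᵢ(closure S), ℝⁿ \ S), let t_max = maxᵢ (ratio of fᵢ),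 τ_min = minᵢ (ratio of gᵢ), and let κ ≥ 1 be an integer with t_max^{κ−1} < d/(2 diam Q). Then for every point x of the invariant set K_𝓘, H_Φ(x) ≤ 2 (diam S)/(τ_min^{1+κ} δ). -/
open Set Metric Filter MeasureTheory
open scoped ENNReal Topology NNReal

/-!
`Φ ∘ f_w = g_w ∘ Φ` on `closure Q` for every word `w`: by construction this holds on the copies
`f_w (closure Q \ ⋃ i, f i '' Q)` of the annulus, and these accumulate on the invariant set, so
it extends by continuity.

Let `ρ_w`, `σ_w` be the ratios of `f_w`, `g_w`. A connectedness argument shows that `Φ` maps the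
`2d`-neighbourhood of `⋃ i, f i '' closure Q` into `S`, and that `Φ '' Q` contains the
`2δ`-neighbourhood of `⋃ i, g i '' closure S`. Transported through the cells, this gives
`L_Φ(x, r) ≤ σ_u diam S` as soon as `r < 2d ρ_u`, and `l_Φ(x, r) ≥ 2δ σ_v` as soon as
`ρ_v diam Q < r`. Take `u` at the last level with `r < 2d ρ_u`, and `v` longer by `1 + κ` letters:
the choice of `κ` gives `ρ_v diam Q < r`, and `σ_v ≥ τ_min^{1+κ} σ_u`.
-/

namespace IsSimilarityWith

variable {X : Type*} [MetricSpace X] {r s : ℝ} {f g : X → X}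

theorem lipschitzWith (h : IsSimilarityWith r f) : LipschitzWith (Real.toNNReal r) f :=
  LipschitzWith.of_dist_le_mul fun x y => by rw [h.2, Real.coe_toNNReal r h.1.le]

theorem continuous (h : IsSimilarityWith r f) : Continuous f :=
  h.lipschitzWith.continuous

theorem injective (h : IsSimilarityWith r f) : Function.Injective f := fun x y hxy => by
  have := h.2 x y
  rw [hxy, dist_self, eq_comm, mul_eq_zero] at this
  exact dist_eq_zero.mp (this.resolve_left h.1.ne')

theorem comp (hf : IsSimilarityWith r f) (hg : IsSimilarityWith s g) :
    IsSimilarityWith (r * s) (f ∘ g) :=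
  ⟨mul_pos hf.1 hg.1, fun x y => by simp only [Function.comp_apply, hf.2, hg.2, mul_assoc]⟩

/-- By Mazur–Ulam, `r⁻¹ • f` is an affine isometry, hence onto in finite dimension. -/
theorem surjective {E : Type*} [NormedAddCommGroup E] [NormedSpace ℝ E] [StrictConvexSpace ℝ E]
    [FiniteDimensional ℝ E] {f : E → E} (h : IsSimilarityWith r f) : Function.Surjective f := by
  have hiso : Isometry fun x => r⁻¹ • f x := Isometry.of_dist_eq fun x y => by
    rw [dist_smul₀, h.2, norm_inv, Real.norm_of_nonneg h.1.le, inv_mul_cancel_left₀ h.1.ne']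
  have : Inhabited E := ⟨0⟩
  intro y
  obtain ⟨x, hx⟩ := (hiso.affineIsometryOfStrictConvexSpace.toAffineIsometryEquiv rfl).surjective
    (r⁻¹ • y)
  have hx : r⁻¹ • f x = r⁻¹ • y := hx
  exact ⟨x, smul_right_injective E (inv_ne_zero h.1.ne') hx⟩

end IsSimilarityWith

section iterComp

variable {X ι : Type*} {f : ι → X → X}

theorem iterComp_append (u v : List ι) : iterComp f (u ++ v) = iterComp f u ∘ iterComp f v := by
  induction u with
  | nil => rfl
  | cons i u ih => simp only [List.cons_append, iterComp, ih, Function.comp_assoc]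

theorem isSimilarityWith_iterComp [MetricSpace X] {rf : ι → ℝ}
    (hf : ∀ i, IsSimilarityWith (rf i) (f i)) (w : List ι) :
    IsSimilarityWith (w.map rf).prod (iterComp f w) := by
  induction w with
  | nil => exact ⟨one_pos, fun x y => (one_mul _).symm⟩
  | cons i w ih => exact (hf i).comp ih

theorem prod_map_pos {rf : ι → ℝ} (hrf : ∀ i, 0 < rf i) (w : List ι) : 0 < (w.map rf).prod :=
  List.prod_pos fun _ ha => by
    obtain ⟨i, -, rfl⟩ := List.mem_map.mp ha
    exact hrf i

theorem prod_map_le_pow_length {rf : ι → ℝ} {t : ℝ} (h0 : ∀ i, 0 ≤ rf i) (ht : ∀ i, rf i ≤ t)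
    (w : List ι) : (w.map rf).prod ≤ t ^ w.length := by
  simpa [List.map_const', List.prod_replicate] using
    List.prod_map_le_prod_map₀ (s := w) rf (fun _ => t) (fun i _ => h0 i) (fun i _ => ht i)

theorem pow_length_le_prod_map {rf : ι → ℝ} {t : ℝ} (h0 : 0 ≤ t) (ht : ∀ i, t ≤ rf i)
    (w : List ι) : t ^ w.length ≤ (w.map rf).prod := by
  simpa [List.map_const', List.prod_replicate] using
    List.prod_map_le_prod_map₀ (s := w) (fun _ => t) rf (fun _ _ => h0) (fun i _ => ht i)

theorem mem_invariantSet_iff [MetricSpace X] {Q : Set X} {x : X} :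
    x ∈ invariantSet f Q ↔ ∀ k, ∃ w : List ι, w.length = k ∧ x ∈ iterComp f w '' closure Q := by
  simp only [invariantSet, mem_iInter, mem_iUnion]
  refine forall_congr' fun k => ⟨fun ⟨w, hw⟩ => ⟨_, List.length_ofFn, hw⟩, ?_⟩
  rintro ⟨w, rfl, hw⟩
  exact ⟨w.get, by rwa [List.ofFn_get]⟩

variable [TopologicalSpace X] {Q : Set X}

theorem iterComp_image_closure_subset (hf : ∀ i, f i '' closure Q ⊆ Q) (w : List ι) :
    iterComp f w '' closure Q ⊆ closure Q := by
  induction w with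
  | nil => simp [iterComp]
  | cons i w ih =>
    rw [iterComp, image_comp]
    exact ((image_mono ih).trans (hf i)).trans subset_closure

theorem iterComp_append_image_subset (hf : ∀ i, f i '' closure Q ⊆ Q) (u : List ι) {v : List ι}
    (hv : v ≠ []) :
    iterComp f (u ++ v) '' closure Q ⊆ iterComp f u '' ⋃ i, f i '' closure Q := by
  obtain ⟨i, v, rfl⟩ := List.exists_cons_of_ne_nil hv
  rw [iterComp_append, image_comp]
  refine image_mono (subset_iUnion_of_subset i ?_)
  rw [iterComp, image_comp]
  exact image_mono (iterComp_image_closure_subset hf v)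

theorem mem_iterComp_take_image_of_lt_length (hf : ∀ i, f i '' closure Q ⊆ Q) {w : List ι}
    {x : X} (hx : x ∈ iterComp f w '' closure Q) {j : ℕ} (hj : j < w.length) :
    x ∈ iterComp f (w.take j) '' ⋃ i, f i '' closure Q := by
  rw [← List.take_append_drop j w] at hx
  exact iterComp_append_image_subset hf _ (by simpa using hj) hx

theorem mem_iUnion_iterComp_image_annulus_or {p : X} (hp : p ∈ closure Q) :
    p ∈ (⋃ w, iterComp f w '' (closure Q \ ⋃ i, f i '' Q)) ∨
      ∀ k, ∃ w : List ι, w.length = k ∧ p ∈ iterComp f w '' closure Q := by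
  rw [← forall_or_left]
  intro k
  induction k with
  | zero => exact Or.inr ⟨[], rfl, p, hp, rfl⟩
  | succ k ih =>
    obtain hA | ⟨w, rfl, a, ha, rfl⟩ := ih
    · exact Or.inl hA
    by_cases haU : a ∈ ⋃ i, f i '' Q
    · obtain ⟨j, b, hb, rfl⟩ := mem_iUnion.mp haU
      refine Or.inr ⟨w ++ [j], by simp, b, subset_closure hb, ?_⟩
      rw [iterComp_append]
      rfl
    · exact Or.inl (mem_iUnion.mpr ⟨w, a, ⟨ha, haU⟩, rfl⟩)

theorem closure_diff_iUnion_image_nonempty [PreconnectedSpace X] (hQo : IsOpen Q)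
    (hf : ∀ i, f i '' closure Q ⊆ Q) (hQ : Q.Nonempty) (hQc : Qᶜ.Nonempty) :
    (closure Q \ ⋃ i, f i '' Q).Nonempty := by
  refine (hQo.frontier_eq ▸ nonempty_frontier_iff.mpr ⟨hQ, fun h => ?_⟩).mono
    (sdiff_subset_sdiff_right (iUnion_subset fun i => (image_mono subset_closure).trans (hf i)))
  simp [h] at hQc

end iterComp

section cells

variable {X ι : Type*} [MetricSpace X] {f : ι → X → X} {Q : Set X}

theorem invariantSet_subset_closure (hf : ∀ i, f i '' closure Q ⊆ Q) :
    invariantSet f Q ⊆ closure Q := fun x hx => by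
  obtain ⟨w, -, hw⟩ := mem_invariantSet_iff.mp hx 0
  exact iterComp_image_closure_subset hf w hw

theorem StrongSeparation.mem_of_apply_mem_iUnion (h : StrongSeparation f Q) {i : ι}
    (hi : Function.Injective (f i)) {y : X} (hy : y ∈ closure Q)
    (hfy : f i y ∈ ⋃ j, f j '' Q) : y ∈ Q := by
  obtain ⟨j, z, hz, hzy⟩ := mem_iUnion.mp hfy
  obtain rfl | hji := eq_or_ne j i
  · exact hi hzy ▸ hz
  · exact absurd (mem_image_of_mem _ hy) <|
      disjoint_left.mp (h.2 j i hji) ⟨z, subset_closure hz, hzy⟩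

theorem mem_closure_range_iterComp {rf : ι → ℝ} (hf : ∀ i, IsSimilarityWith (rf i) (f i))
    {t : ℝ} (ht0 : 0 ≤ t) (ht : ∀ i, rf i ≤ t) (ht1 : t < 1) (hQ : Bornology.IsBounded Q)
    {b p : X} (hb : b ∈ closure Q)
    (hp : ∀ k, ∃ w : List ι, w.length = k ∧ p ∈ iterComp f w '' closure Q) :
    p ∈ closure (range fun w => iterComp f w b) := by
  rw [Metric.mem_closure_iff]
  intro ε hε
  have hlim : Filter.Tendsto (fun k : ℕ => t ^ k * diam Q) Filter.atTop (𝓝 0) := by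
    simpa using (tendsto_pow_atTop_nhds_zero_of_lt_one ht0 ht1).mul_const (diam Q)
  obtain ⟨k, hk⟩ := (hlim.eventually (gt_mem_nhds hε)).exists
  obtain ⟨w, rfl, a, ha, rfl⟩ := hp k
  refine ⟨_, ⟨w, rfl⟩, ?_⟩
  calc dist (iterComp f w a) (iterComp f w b)
      = (w.map rf).prod * dist a b := (isSimilarityWith_iterComp hf w).2 a b
    _ ≤ t ^ w.length * diam Q := by
      gcongr
      · exact prod_map_le_pow_length (fun i => (hf i).1.le) ht w
      · rw [← diam_closure]; exact dist_le_diam_of_mem hQ.closure ha hb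
    _ < ε := hk

theorem closure_iUnion_image [ProperSpace X] [Finite ι] (hf : ∀ i, Continuous (f i))
    (hQ : Bornology.IsBounded Q) : closure (⋃ i, f i '' Q) = ⋃ i, f i '' closure Q := by
  rw [closure_iUnion_of_finite]
  refine iUnion_congr fun i => (image_closure_subset_closure_image (hf i)).antisymm' ?_
  exact (hQ.isCompact_closure.image (hf i)).isClosed.closure_subset_iff.mpr
    (image_mono subset_closure)

end cells

section setDist

variable {X : Type*} [MetricSpace X] {A B : Set X}

theorem setDist_le_dist {a b : X} (ha : a ∈ A) (hb : b ∈ B) : setDist A B ≤ dist a b :=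
  csInf_le ⟨0, by rintro _ ⟨_, _, rfl⟩; exact dist_nonneg⟩ ⟨(a, b), ⟨ha, hb⟩, rfl⟩

theorem ball_setDist_compl_subset {a : X} (ha : a ∈ A) : ball a (setDist A Bᶜ) ⊆ B := by
  intro b hb
  by_contra hbB
  exact (setDist_le_dist ha hbB).not_gt (mem_ball'.mp hb)

theorem nonempty_of_setDist_pos (h : 0 < setDist A B) : B.Nonempty := by
  by_contra hB
  simp [not_nonempty_iff_eq_empty.mp hB, setDist] at h

theorem setDist_compl_pos (hA : IsCompact A) (hAne : A.Nonempty) {U : Set X} (hU : IsOpen U)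
    (hAU : A ⊆ U) (hUc : Uᶜ.Nonempty) : 0 < setDist A Uᶜ := by
  obtain ⟨ε, hε, hthick⟩ := hA.exists_thickening_subset_open hU hAU
  refine hε.trans_le (le_csInf ((hAne.prod hUc).image _) ?_)
  rintro _ ⟨⟨a, b⟩, ⟨ha, hb⟩, rfl⟩
  by_contra hab
  exact hb (hthick (mem_thickening_iff.mpr ⟨a, ha, by rw [dist_comm]; exact not_le.mp hab⟩))

end setDist

section dilatation

variable {X : Type*} [MetricSpace X] {Φ T T' : X → X} {ρ σ R r : ℝ}

theorem linDil_le_of_conj (hT : IsSimilarityWith ρ T) (hTs : Function.Surjective T)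
    (hT' : IsSimilarityWith σ T') {x' : X} (hconj : ∀ y ∈ ball x' R, Φ (T y) = T' (Φ y))
    {B : Set X} (hB : Bornology.IsBounded B) (hΦB : Φ '' ball x' R ⊆ B) (hr : r < R * ρ) :
    linDil univ Φ (T x') r ≤ ENNReal.ofReal (σ * diam B) := by
  refine iSup₂_le fun y hy => ?_
  obtain ⟨y', rfl⟩ := hTs y
  have hy' : y' ∈ ball x' R := by
    rw [mem_ball', ← mul_lt_mul_iff_of_pos_left hT.1, ← hT.2, mul_comm]
    exact hy.2.trans_lt hr
  have hx' : x' ∈ ball x' R := mem_ball_self (pos_of_mem_ball hy')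
  rw [edist_dist, hconj x' hx', hconj y' hy', hT'.2]
  gcongr
  · exact hT'.1.le
  · exact dist_le_diam_of_mem hB (hΦB (mem_image_of_mem Φ hx')) (hΦB (mem_image_of_mem Φ hy'))

theorem le_linCon_of_conj (hΦ : Function.Injective Φ) (hT : IsSimilarityWith ρ T)
    (hT' : IsSimilarityWith σ T') (hT's : Function.Surjective T') {U : Set X}
    (hconj : ∀ y ∈ U, Φ (T y) = T' (Φ y)) {x' : X} (hx' : x' ∈ U)
    (hball : ball (Φ x') R ⊆ Φ '' U) (hU : Bornology.IsBounded U) (hr : ρ * diam U < r) :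
    ENNReal.ofReal (σ * R) ≤ linCon univ Φ (T x') r := by
  refine le_iInf₂ fun y hy => ?_
  obtain ⟨z, hz⟩ := hT's (Φ y)
  have hRz : R ≤ dist (Φ x') z := by
    by_contra! hzR
    obtain ⟨p, hp, rfl⟩ := hball (mem_ball'.mpr hzR)
    have hyp : y = T p := hΦ (by rw [← hz, hconj p hp])
    have : dist (T x') y ≤ ρ * diam U := by
      rw [hyp, hT.2]
      exact mul_le_mul_of_nonneg_left (dist_le_diam_of_mem hU hx' hp) hT.1.le
    exact hy.2.not_gt (this.trans_lt hr)
  rw [edist_dist, hconj x' hx', ← hz, hT'.2]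
  gcongr
  exact hT'.1.le

end dilatation

theorem IsHomeoOn.image_eq {X : Type*} [TopologicalSpace X] {φ : X → X} {Ω Ω' : Set X}
    (h : IsHomeoOn φ Ω Ω') : φ '' Ω = Ω' := by
  obtain ⟨e, he⟩ := h
  ext z
  refine ⟨?_, fun hz => ⟨e.symm ⟨z, hz⟩, (e.symm ⟨z, hz⟩).2, ?_⟩⟩
  · rintro ⟨p, hp, rfl⟩
    exact he ⟨p, hp⟩ ▸ (e ⟨p, hp⟩).2
  · rw [← he, e.apply_symm_apply]

theorem Homeomorph.image_eq_of_isHomeoOn_compl {X : Type*} [TopologicalSpace X] {Φ : X ≃ₜ X}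
    {φ : X → X} {A B : Set X} (hφ : IsHomeoOn φ Aᶜ Bᶜ) (hΦ : ∀ x ∈ Aᶜ, Φ x = φ x) :
    Φ '' A = B :=
  compl_injective <| by rw [← Φ.image_compl, EqOn.image_eq (f₁ := Φ) hΦ, hφ.image_eq]

section conjugacy

variable {X ι : Type*} [MetricSpace X] {f g : ι → X → X} {Q : Set X} {Φ : X → X}

/-- The copies of the annulus accumulate at every point of `closure Q` outside them, so the
relation extends from them by continuity. -/
theorem conj_on_closure_of_conj_on_annuli {rf : ι → ℝ} (hf : ∀ i, IsSimilarityWith (rf i) (f i))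
    (hg : ∀ i, Continuous (g i)) {t : ℝ} (ht0 : 0 ≤ t) (ht : ∀ i, rf i ≤ t) (ht1 : t < 1)
    (hQ : Bornology.IsBounded Q) (hann : (closure Q \ ⋃ i, f i '' Q).Nonempty)
    (hΦ : Continuous Φ) {φ : X → X}
    (hcell : ∀ w, ∀ a ∈ closure Q \ ⋃ i, f i '' Q, Φ (iterComp f w a) = iterComp g w (φ a)) :
    ∀ p ∈ closure Q, ∀ i, Φ (f i p) = g i (Φ p) := by
  intro p hp i
  set A := ⋃ w, iterComp f w '' (closure Q \ ⋃ i, f i '' Q)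
  have hA : EqOn (Φ ∘ f i) (g i ∘ Φ) A := by
    simp only [A, EqOn, mem_iUnion]
    rintro _ ⟨w, a, ha, rfl⟩
    exact (hcell (i :: w) a ha).trans (congrArg (g i) (hcell w a ha).symm)
  refine hA.closure (hΦ.comp (hf i).continuous) ((hg i).comp hΦ) ?_
  obtain ⟨b, hb⟩ := hann
  rcases mem_iUnion_iterComp_image_annulus_or hp with hpA | hpK
  · exact subset_closure hpA
  · refine closure_mono ?_ (mem_closure_range_iterComp hf ht0 ht ht1 hQ hb.1 hpK)
    rintro _ ⟨w, rfl⟩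
    exact mem_iUnion.mpr ⟨w, b, hb, rfl⟩

theorem conj_iterComp (hsep : ∀ i, f i '' closure Q ⊆ Q)
    (hconj : ∀ p ∈ closure Q, ∀ i, Φ (f i p) = g i (Φ p)) (w : List ι) {p : X}
    (hp : p ∈ closure Q) : Φ (iterComp f w p) = iterComp g w (Φ p) := by
  induction w with
  | nil => rfl
  | cons i w ih =>
    exact (hconj _ (iterComp_image_closure_subset hsep w ⟨p, hp, rfl⟩) i).trans
      (congrArg (g i) ih)

end conjugacy

section generatedMap

variable {E ι : Type*} [NormedAddCommGroup E] [NormedSpace ℝ E] {f g : ι → E → E}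
  {Q S : Set E} {Φ : E ≃ₜ E}

theorem image_iUnion_image_closure [FiniteDimensional ℝ E] [Finite ι]
    (hf : ∀ i, Continuous (f i)) (hg : ∀ i, Continuous (g i)) (hQ : Bornology.IsBounded Q)
    (hS : Bornology.IsBounded S) (hΦU : Φ '' ⋃ i, f i '' Q = ⋃ i, g i '' S) :
    Φ '' ⋃ i, f i '' closure Q = ⋃ i, g i '' closure S := by
  rw [← closure_iUnion_image hf hQ, ← closure_iUnion_image hg hS, Φ.image_closure, hΦU]

theorem setDist_iUnion_image_compl_pos [FiniteDimensional ℝ E] [Nontrivial E] [Finite ι]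
    (hg : ∀ i, Continuous (g i)) (hSo : IsOpen S) (hSb : Bornology.IsBounded S)
    (hsep : StrongSeparation g S) (hne : (⋃ i, g i '' closure S).Nonempty) :
    0 < setDist (⋃ i, g i '' closure S) Sᶜ := by
  refine setDist_compl_pos (isCompact_iUnion fun i => hSb.isCompact_closure.image (hg i)) hne
    hSo (iUnion_subset hsep.1) (nonempty_compl.mpr ?_)
  rintro rfl
  exact NormedSpace.unbounded_univ ℝ E hSb

/-- The image of the ball is connected, contains `Φ c ∈ S`, and cannot cross the frontier of `S`:
for `p ∈ Q` with `Φ p ∈ closure S`, the point `g i (Φ p) = Φ (f i p)` lies in `⋃ j, g j '' S`,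
which by strong separation forces `Φ p ∈ S`. -/
theorem image_ball_setDist_subset (hg : ∀ i, Function.Injective (g i)) (hS : IsOpen S)
    (hsepS : StrongSeparation g S) (hΦU : Φ '' ⋃ i, f i '' Q = ⋃ i, g i '' S)
    (hcore : Φ '' ⋃ i, f i '' closure Q ⊆ ⋃ i, g i '' closure S)
    (hconj : ∀ p ∈ closure Q, ∀ i, Φ (f i p) = g i (Φ p)) {c : E}
    (hc : c ∈ ⋃ i, f i '' closure Q) :
    Φ '' ball c (setDist (⋃ i, f i '' closure Q) Qᶜ) ⊆ S := by
  set R := setDist (⋃ i, f i '' closure Q) Qᶜ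
  obtain hR | hR := le_or_gt R 0
  · simp [ball_eq_empty.mpr hR]
  obtain ⟨i, -⟩ := mem_iUnion.mp hc
  have hΦc : Φ c ∈ S := iUnion_subset hsepS.1 (hcore (mem_image_of_mem Φ hc))
  refine ((convex_ball c R).isPreconnected.image Φ Φ.continuous.continuousOn
    ).subset_of_closure_inter_subset hS ⟨Φ c, mem_image_of_mem Φ (mem_ball_self hR), hΦc⟩ ?_
  rintro _ ⟨hcl, p, hp, rfl⟩
  have hpQ : p ∈ Q := ball_setDist_compl_subset hc hp
  refine hsepS.mem_of_apply_mem_iUnion (hg i) hcl ?_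
  rw [← hconj p (subset_closure hpQ), ← hΦU]
  exact mem_image_of_mem Φ (mem_iUnion.mpr ⟨i, p, hpQ, rfl⟩)

/-- The ball is connected, lies in `S`, meets `Φ '' Q` at `c`, and misses
`frontier (Φ '' Q) = Φ '' frontier Q`: for `p ∉ Q` the point `Φ (f i p) = g i (Φ p)` lies
outside `⋃ j, g j '' S`, so `Φ p ∉ S`. -/
theorem ball_setDist_subset_image (hf : ∀ i, Function.Injective (f i)) (hQ : IsOpen Q)
    (hsepQ : StrongSeparation f Q) (hΦU : Φ '' ⋃ i, f i '' Q = ⋃ i, g i '' S)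
    (hcore : ⋃ i, g i '' closure S ⊆ Φ '' ⋃ i, f i '' closure Q)
    (hconj : ∀ p ∈ closure Q, ∀ i, Φ (f i p) = g i (Φ p)) {c : E}
    (hc : c ∈ ⋃ i, g i '' closure S) :
    ball c (setDist (⋃ i, g i '' closure S) Sᶜ) ⊆ Φ '' Q := by
  set R := setDist (⋃ i, g i '' closure S) Sᶜ
  obtain hR | hR := le_or_gt R 0
  · simp [ball_eq_empty.mpr hR]
  obtain ⟨i, -⟩ := mem_iUnion.mp hc
  have hcΦQ : c ∈ Φ '' Q := image_mono (iUnion_subset hsepQ.1) (hcore hc)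
  refine (convex_ball c R).isPreconnected.subset_of_closure_inter_subset
    (Φ.isOpen_image.mpr hQ) ⟨c, mem_ball_self hR, hcΦQ⟩ ?_
  rintro z ⟨hcl, hz⟩
  rw [← Φ.image_closure] at hcl
  obtain ⟨p, hp, rfl⟩ := hcl
  refine mem_image_of_mem Φ (hsepQ.mem_of_apply_mem_iUnion (hf i) hp ?_)
  have : Φ (f i p) ∈ Φ '' ⋃ i, f i '' Q := by
    rw [hconj p hp, hΦU]
    exact mem_iUnion.mpr ⟨i, Φ p, ball_setDist_compl_subset hc hz, rfl⟩
  exact Φ.injective.mem_set_image.mp this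

theorem linDil_div_linCon_le [StrictConvexSpace ℝ E] [FiniteDimensional ℝ E] {rf rg : ι → ℝ}
    (hf : ∀ i, IsSimilarityWith (rf i) (f i)) (hg : ∀ i, IsSimilarityWith (rg i) (g i))
    (hQo : IsOpen Q) (hQb : Bornology.IsBounded Q) (hSo : IsOpen S)
    (hSb : Bornology.IsBounded S) (hsepQ : StrongSeparation f Q) (hsepS : StrongSeparation g S)
    (hΦU : Φ '' ⋃ i, f i '' Q = ⋃ i, g i '' S)
    (hcore : Φ '' ⋃ i, f i '' closure Q = ⋃ i, g i '' closure S)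
    (hconj : ∀ p ∈ closure Q, ∀ i, Φ (f i p) = g i (Φ p)) {τ : ℝ} (hτ0 : 0 < τ)
    (hτ : ∀ i, τ ≤ rg i) (hδ : 0 < setDist (⋃ i, g i '' closure S) Sᶜ) {u s : List ι} {x : E}
    (hxu : x ∈ iterComp f u '' ⋃ i, f i '' closure Q)
    (hxs : x ∈ iterComp f (u ++ s) '' ⋃ i, f i '' closure Q) {r : ℝ}
    (hru : r < setDist (⋃ i, f i '' closure Q) Qᶜ * (u.map rf).prod)
    (hrs : ((u ++ s).map rf).prod * diam Q < r) :
    linDil univ Φ x r / linCon univ Φ x r ≤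
      ENNReal.ofReal (diam S / (τ ^ s.length * setDist (⋃ i, g i '' closure S) Sᶜ)) := by
  have hconjw : ∀ w, ∀ p ∈ closure Q, Φ (iterComp f w p) = iterComp g w (Φ p) :=
    fun w _ hp => conj_iterComp hsepQ.1 hconj w hp
  obtain ⟨x', hx', hx'x⟩ := hxu
  obtain ⟨x'', hx'', hx''x⟩ := hxs
  have hupper := linDil_le_of_conj (isSimilarityWith_iterComp hf u)
    (isSimilarityWith_iterComp hf u).surjective (isSimilarityWith_iterComp hg u)
    (fun y hy => hconjw u y (subset_closure (ball_setDist_compl_subset hx' hy))) hSb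
    (image_ball_setDist_subset (fun i => (hg i).injective) hSo hsepS hΦU hcore.subset hconj hx')
    hru
  have hlower := le_linCon_of_conj Φ.injective (isSimilarityWith_iterComp hf (u ++ s))
    (isSimilarityWith_iterComp hg (u ++ s)) (isSimilarityWith_iterComp hg (u ++ s)).surjective
    (fun y hy => hconjw (u ++ s) y (subset_closure hy)) (iUnion_subset hsepQ.1 hx'')
    (ball_setDist_subset_image (fun i => (hf i).injective) hQo hsepQ hΦU hcore.superset hconj
      (hcore ▸ mem_image_of_mem Φ hx'')) hQb hrs
  rw [hx'x] at hupper
  rw [hx''x] at hlower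
  have hσu := (isSimilarityWith_iterComp hg u).1
  calc linDil univ Φ x r / linCon univ Φ x r
      ≤ ENNReal.ofReal ((u.map rg).prod * diam S) / ENNReal.ofReal
          (((u ++ s).map rg).prod * setDist (⋃ i, g i '' closure S) Sᶜ) :=
        ENNReal.div_le_div hupper hlower
    _ = ENNReal.ofReal ((u.map rg).prod * diam S /
          (((u ++ s).map rg).prod * setDist (⋃ i, g i '' closure S) Sᶜ)) :=
        (ENNReal.ofReal_div_of_pos (mul_pos (isSimilarityWith_iterComp hg _).1 hδ)).symm
    _ ≤ _ := by
      refine ENNReal.ofReal_le_ofReal ?_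
      rw [List.map_append, List.prod_append, mul_assoc, mul_div_mul_left _ _ hσu.ne']
      have := pow_length_le_prod_map hτ0.le hτ s
      gcongr

end generatedMap

theorem exists_lt_not_and_succ {p : ℕ → Prop} (h0 : ¬p 0) {K : ℕ} (hK : p K) :
    ∃ k < K, ¬p k ∧ p (k + 1) := by
  induction K with
  | zero => exact absurd hK h0
  | succ K ih =>
    by_cases hpK : p K
    · obtain ⟨k, hk, h⟩ := ih hpK
      exact ⟨k, hk.trans K.lt_succ_self, h⟩
    · exact ⟨K, K.lt_succ_self, hpK, hK⟩

theorem exists_words_at_scale {X ι : Type*} [TopologicalSpace X] {f : ι → X → X} {Q : Set X}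
    (hsep : ∀ i, f i '' closure Q ⊆ Q) {rf : ι → ℝ} (hrf : ∀ i, 0 < rf i) {t : ℝ}
    (ht : ∀ i, rf i ≤ t) (ht1 : t < 1) {κ : ℕ} {c D r : ℝ} (hc0 : 0 ≤ c) (hc : t ^ κ * c < D)
    (hr0 : 0 < r) (hrD : r < D) {x : X}
    (hx : ∀ k, ∃ w : List ι, w.length = k ∧ x ∈ iterComp f w '' closure Q) :
    ∃ u s : List ι, s.length = 1 + κ ∧ x ∈ iterComp f u '' ⋃ i, f i '' closure Q ∧
      x ∈ iterComp f (u ++ s) '' ⋃ i, f i '' closure Q ∧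
      r < D * (u.map rf).prod ∧ ((u ++ s).map rf).prod * c < r := by
  have hD : 0 < D := hr0.trans hrD
  obtain ⟨K, hK⟩ := exists_pow_lt_of_lt_one (div_pos hr0 hD) ht1
  obtain ⟨w, hwlen, hxw⟩ := hx (K + κ + 1)
  have hρ : ∀ j ≤ w.length, ((w.take j).map rf).prod ≤ t ^ j := fun j hj => by
    simpa [hj] using prod_map_le_pow_length (fun i => (hrf i).le) ht (w.take j)
  obtain ⟨k, hkK, hk, hk1⟩ :=
    exists_lt_not_and_succ (p := fun j => D * ((w.take j).map rf).prod ≤ r) (by simpa using hrD)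
      (K := K) (by
        have := hρ K (by omega)
        rw [lt_div_iff₀ hD] at hK
        nlinarith)
  refine ⟨w.take k, (w.drop k).take (1 + κ), ?_,
    mem_iterComp_take_image_of_lt_length hsep hxw (by omega), ?_, not_le.mp hk, ?_⟩
  · simp only [List.length_take, List.length_drop]
    omega
  · rw [← List.take_add]
    exact mem_iterComp_take_image_of_lt_length hsep hxw (by omega)
  · rw [← List.take_add, ← add_assoc, List.take_add, List.map_append, List.prod_append]
    have hρ1 := prod_map_pos hrf (w.take (k + 1))
    have hρ2 : (((w.drop (k + 1)).take κ).map rf).prod ≤ t ^ κ := by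
      simpa [show κ ≤ w.length - (k + 1) by omega] using
        prod_map_le_pow_length (fun i => (hrf i).le) ht ((w.drop (k + 1)).take κ)
    calc _ = ((w.take (k + 1)).map rf).prod * ((((w.drop (k + 1)).take κ).map rf).prod * c) := by
          ring
      _ ≤ ((w.take (k + 1)).map rf).prod * (t ^ κ * c) := by gcongr
      _ < ((w.take (k + 1)).map rf).prod * D := by gcongr
      _ ≤ r := by rw [mul_comm]; exact hk1

theorem pos_and_pow_mul_lt_of_pow_pred_lt_div {t d c : ℝ} {κ : ℕ} (ht0 : 0 < t) (ht1 : t < 1)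
    (hc : 0 ≤ c) (h : t ^ (κ - 1) < d / (2 * c)) : 0 < d ∧ t ^ κ * c < 2 * d := by
  have h2c : 0 < 2 * c ∧ 0 < d := by
    rcases div_pos_iff.mp ((pow_pos ht0 (κ - 1)).trans h) with h' | h'
    · exact ⟨h'.2, h'.1⟩
    · linarith [h'.2]
  have hκ : t ^ κ ≤ t ^ (κ - 1) := pow_le_pow_of_le_one ht0.le ht1.le (Nat.sub_le κ 1)
  have := (lt_div_iff₀ h2c.1).mp h
  exact ⟨h2c.2, by nlinarith⟩

theorem generated_map_dilatation_on_invariant_set_general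
    (n N : ℕ)
    (f g : Fin N → EuclideanSpace ℝ (Fin n) → EuclideanSpace ℝ (Fin n))
    (rf rg : Fin N → ℝ)
    (hf : ∀ i, IsSimilarityWith (rf i) (f i)) (hrf : ∀ i, rf i < 1)
    (hg : ∀ i, IsSimilarityWith (rg i) (g i))
    (Q S : Set (EuclideanSpace ℝ (Fin n)))
    (hQo : IsOpen Q) (hQb : Bornology.IsBounded Q)
    (hSo : IsOpen S) (hSb : Bornology.IsBounded S)
    (hsepQ : StrongSeparation f Q) (hsepS : StrongSeparation g S)
    (φ : EuclideanSpace ℝ (Fin n) → EuclideanSpace ℝ (Fin n))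
    (hφ_homeo : IsHomeoOn φ (⋃ i, f i '' Q)ᶜ (⋃ i, g i '' S)ᶜ)
    (Φ : EuclideanSpace ℝ (Fin n) ≃ₜ EuclideanSpace ℝ (Fin n))
    (hΦ_out : ∀ x ∈ (⋃ i, f i '' Q)ᶜ, Φ x = φ x)
    (hΦ_cell : ∀ w : List (Fin N), ∀ x ∈ closure Q \ ⋃ i, f i '' Q,
      Φ (iterComp f w x) = iterComp g w (φ x))
    (d δ : ℝ)
    (hd : d = (1 / 2) * setDist (⋃ i, f i '' closure Q) Qᶜ)
    (hδ : δ = (1 / 2) * setDist (⋃ i, g i '' closure S) Sᶜ)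
    (tmax τmin : ℝ)
    (htmax : IsGreatest (Set.range rf) tmax)
    (hτmin : IsLeast (Set.range rg) τmin)
    (κ : ℕ) (hκ₂ : tmax ^ (κ - 1) < d / (2 * Metric.diam Q)) :
    ∀ x ∈ invariantSet f Q,
      qcH Set.univ ⇑Φ x ≤
        ENNReal.ofReal (2 * Metric.diam S / (τmin ^ (1 + κ) * δ)) := by
  intro x hx
  obtain ⟨⟨i₁, rfl⟩, htmax⟩ := htmax
  obtain ⟨⟨i₀, rfl⟩, hτmin⟩ := hτmin
  have hd' : setDist (⋃ i, f i '' closure Q) Qᶜ = 2 * d := by rw [hd]; ring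
  have hδ' : setDist (⋃ i, g i '' closure S) Sᶜ = 2 * δ := by rw [hδ]; ring
  obtain ⟨hd0, hκ⟩ := pos_and_pow_mul_lt_of_pow_pred_lt_div (hf i₁).1 (hrf i₁) diam_nonneg hκ₂
  obtain ⟨a, ha⟩ : Q.Nonempty :=
    closure_nonempty_iff.mp ⟨x, invariantSet_subset_closure hsepQ.1 hx⟩
  obtain ⟨b, hb⟩ : Qᶜ.Nonempty := nonempty_of_setDist_pos (by linarith)
  have : Nontrivial (EuclideanSpace ℝ (Fin n)) := nontrivial_of_ne a b (ne_of_mem_of_not_mem ha hb)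
  have hΦU := Φ.image_eq_of_isHomeoOn_compl hφ_homeo hΦ_out
  have hcore := image_iUnion_image_closure (fun i => (hf i).continuous)
    (fun i => (hg i).continuous) hQb hSb hΦU
  have hconj := conj_on_closure_of_conj_on_annuli hf (fun i => (hg i).continuous) (hf i₁).1.le
    (fun i => htmax ⟨i, rfl⟩) (hrf i₁) hQb
    (closure_diff_iUnion_image_nonempty hQo hsepQ.1 ⟨a, ha⟩ ⟨b, hb⟩) Φ.continuous hΦ_cell
  have hδ0 := setDist_iUnion_image_compl_pos (fun i => (hg i).continuous) hSo hSb hsepS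
    (hcore ▸ ⟨Φ (f i₀ a), mem_image_of_mem Φ (mem_iUnion.mpr ⟨i₀, a, subset_closure ha, rfl⟩)⟩)
  refine Filter.limsup_le_of_le (by isBoundedDefault) ?_
  filter_upwards [Ioo_mem_nhdsGT (by linarith : (0 : ℝ) < 2 * d)] with r hr
  obtain ⟨u, s, hs, hxu, hxs, hru, hrs⟩ := exists_words_at_scale hsepQ.1 (fun i => (hf i).1)
    (fun i => htmax ⟨i, rfl⟩) (hrf i₁) diam_nonneg hκ hr.1 hr.2 (mem_invariantSet_iff.mp hx)
  refine (linDil_div_linCon_le hf hg hQo hQb hSo hSb hsepQ hsepS hΦU hcore hconj (hg i₀).1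
    (fun i => hτmin ⟨i, rfl⟩) hδ0 hxu hxs (hd' ▸ hru) hrs).trans (ENNReal.ofReal_le_ofReal ?_)
  have hτδ : 0 < rg i₀ ^ (1 + κ) * δ := mul_pos (pow_pos (hg i₀).1 _) (by linarith)
  rw [hs, hδ']
  exact div_le_div₀ (by positivity) (by linarith [diam_nonneg (s := S)]) hτδ (by linarith)

/-- **Dilatation bound on the invariant set.** Let `𝓘 = {f i}`, `𝓙 = {g i}` be iterated
function systems of contracting similarities of `ℝⁿ` with the strong separation condition
on bounded open sets `Q`, `S`, let `φ` be an `H`-quasiconformal homeomorphism of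
`ℝⁿ \ ⋃ᵢ fᵢ(Q)` onto `ℝⁿ \ ⋃ᵢ gᵢ(S)` satisfying the compatibility condition, and let
`Φ : ℝⁿ → ℝⁿ` be the generated homeomorphism. With `d`, `δ`, `t_max`, `τ_min`, `κ` as in
the statement, `H_Φ(x) ≤ 2 diam S / (τ_min^{1+κ} δ)` for every `x ∈ K_𝓘`. -/
theorem generated_map_dilatation_on_invariant_set
    (n N : ℕ)
    (f g : Fin N → EuclideanSpace ℝ (Fin n) → EuclideanSpace ℝ (Fin n))
    (rf rg : Fin N → ℝ)
    (hf : ∀ i, IsSimilarityWith (rf i) (f i)) (hrf : ∀ i, rf i < 1)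
    (hg : ∀ i, IsSimilarityWith (rg i) (g i)) (hrg : ∀ i, rg i < 1)
    (Q S : Set (EuclideanSpace ℝ (Fin n)))
    (hQo : IsOpen Q) (hQb : Bornology.IsBounded Q)
    (hSo : IsOpen S) (hSb : Bornology.IsBounded S)
    (hsepQ : StrongSeparation f Q) (hsepS : StrongSeparation g S)
    (φ : EuclideanSpace ℝ (Fin n) → EuclideanSpace ℝ (Fin n)) (H : ℝ) (hH : 1 ≤ H)
    (hφ_homeo : IsHomeoOn φ (⋃ i, f i '' Q)ᶜ (⋃ i, g i '' S)ᶜ)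
    (hφ_qc : ∀ x ∈ (⋃ i, f i '' Q)ᶜ, qcH (⋃ i, f i '' Q)ᶜ φ x ≤ ENNReal.ofReal H)
    (hφ_compat : ∃ ε > 0, ∀ y ∉ Q, Metric.infDist y Q ≤ ε →
      ∀ i, φ (f i y) = g i (φ y))
    (Φ : EuclideanSpace ℝ (Fin n) ≃ₜ EuclideanSpace ℝ (Fin n))
    (hΦ_out : ∀ x ∈ (⋃ i, f i '' Q)ᶜ, Φ x = φ x)
    (hΦ_cell : ∀ w : List (Fin N), ∀ x ∈ closure Q \ ⋃ i, f i '' Q,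
      Φ (iterComp f w x) = iterComp g w (φ x))
    (d δ : ℝ)
    (hd : d = (1 / 2) * setDist (⋃ i, f i '' closure Q) Qᶜ)
    (hδ : δ = (1 / 2) * setDist (⋃ i, g i '' closure S) Sᶜ)
    (tmax τmin : ℝ)
    (htmax : IsGreatest (Set.range rf) tmax)
    (hτmin : IsLeast (Set.range rg) τmin)
    (κ : ℕ) (hκ₁ : 1 ≤ κ) (hκ₂ : tmax ^ (κ - 1) < d / (2 * Metric.diam Q)) :
    ∀ x ∈ invariantSet f Q,
      qcH Set.univ ⇑Φ x ≤
        ENNReal.ofReal (2 * Metric.diam S / (τmin ^ (1 + κ) * δ)) :=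
  generated_map_dilatation_on_invariant_set_general n N f g rf rg hf hrf hg Q S hQo hQb hSo hSb
    hsepQ hsepS φ hφ_homeo Φ hΦ_out hΦ_cell d δ hd hδ tmax τmin htmax hτmin κ hκ₂
end
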